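/- Under the stated clustered-model assumptions with X = [U T], suppose the within-cluster fixed effects are nested (T_h T_k' = 0 for h ≠ k) and W = Φ^{-1}. Let D_i be invertible with D_i'D_i = Φ_i. Then the matrix B_i = D_i (I−H_X)_i Φ (I−H_X)_i' D_i' has the explicit form B_i = D_i (Φ_i − Ü_i M_Ü Ü_i' − T_i M_T T_i') D_i'. -/

import Mathlib

/-!
Write `P_Z = Z M_Z Zᵀ`, so that `H_Z = P_Z W`. Since `W = Φ⁻¹` and `H_X` is the `W`-orthogonal
projection onto the columns of `X`, `(I − H_X) Φ (I − H_X)ᵀ = Φ − P_X`. The matrix `[Ü T]` equals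
`X A` for a unipotent block-triangular `A`, so it has the same `P`; its Gram matrix is block
diagonal because `Tᵀ W Ü = 0`, which gives the Frisch–Waugh decomposition `P_X = P_Ü + P_T`.
Cluster `i`'s diagonal block of `Φ − P_Ü − P_T` is the claim. Positive definiteness of `W`, which
makes the Gram matrices of `Ü` and `T` invertible, comes from `Φ = Dᵀ D` with `D = diag(D_i)`
invertible.
-/

open Matrix MeasureTheory

abbrev Obs {m : ℕ} (n : Fin m → ℕ) : Type := (i : Fin m) × Fin (n i)

/-- The rows of a stacked matrix belonging to cluster `i`. -/
def cRows {m : ℕ} {n : Fin m → ℕ} {c : Type*} (i : Fin m)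
    (M : Matrix (Obs n) c ℝ) : Matrix (Fin (n i)) c ℝ :=
  Matrix.of fun j k => M ⟨i, j⟩ k

/-- The entries of a stacked vector belonging to cluster `i`. -/
def cVec {m : ℕ} {n : Fin m → ℕ} (i : Fin m) (v : Obs n → ℝ) : Fin (n i) → ℝ :=
  fun j => v ⟨i, j⟩

/-- `M_Z = (Zᵀ W Z)⁻¹`. -/
noncomputable def Mmat {Ω q : Type*} [Fintype Ω] [Fintype q] [DecidableEq q]
    (W : Matrix Ω Ω ℝ) (Z : Matrix Ω q ℝ) : Matrix q q ℝ :=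
  (Zᵀ * W * Z)⁻¹

/-- `H_Z = Z M_Z Zᵀ W`. -/
noncomputable def Hmat {Ω q : Type*} [Fintype Ω] [Fintype q] [DecidableEq q]
    (W : Matrix Ω Ω ℝ) (Z : Matrix Ω q ℝ) : Matrix Ω Ω ℝ :=
  Z * Mmat W Z * Zᵀ * W

lemma mulVec_injective_of_fromCols {Ω p q R : Type*} [Fintype p] [Fintype q] [Semiring R]
    {A₁ : Matrix Ω p R} {A₂ : Matrix Ω q R} (h : Function.Injective (fromCols A₁ A₂).mulVec) :
    Function.Injective A₁.mulVec ∧ Function.Injective A₂.mulVec := by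
  constructor
  · intro v w hvw
    have := @h (Sum.elim v 0) (Sum.elim w 0) (by simp only [fromCols_mulVec_sumElim, hvw])
    exact funext fun j => by simpa using congrFun this (Sum.inl j)
  · intro v w hvw
    have := @h (Sum.elim 0 v) (Sum.elim 0 w) (by simp only [fromCols_mulVec_sumElim, hvw])
    exact funext fun j => by simpa using congrFun this (Sum.inr j)

lemma isUnit_blockDiagonal' {ι R : Type*} [Fintype ι] [DecidableEq ι] {m' : ι → Type*}
    [∀ i, Fintype (m' i)] [∀ i, DecidableEq (m' i)] [Semiring R]
    {M : ∀ i, Matrix (m' i) (m' i) R} (h : ∀ i, IsUnit (M i)) : IsUnit (blockDiagonal' M) :=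
  (Pi.isUnit_iff.2 h).map (blockDiagonal'RingHom m' R)

section Gram

variable {Ω p q : Type*} [Fintype Ω] [Fintype p] [DecidableEq p] [Fintype q] [DecidableEq q]
  {W : Matrix Ω Ω ℝ}

lemma Mmat_transpose (hW : W.IsSymm) (Z : Matrix Ω p ℝ) : (Mmat W Z)ᵀ = Mmat W Z := by
  rw [Mmat, transpose_nonsing_inv, transpose_mul, transpose_mul, transpose_transpose, hW.eq,
    Matrix.mul_assoc]

lemma isUnit_det_gram_of_posDef (hW : W.PosDef) {Z : Matrix Ω p ℝ}
    (hZ : Function.Injective Z.mulVec) : IsUnit (Zᵀ * W * Z).det := by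
  rw [← isUnit_iff_isUnit_det, ← conjTranspose_eq_transpose_of_trivial]
  exact (hW.conjTranspose_mul_mul_same hZ).isUnit

lemma mulVec_injective_of_isUnit_det_gram {Z : Matrix Ω p ℝ}
    (hZ : IsUnit (Zᵀ * W * Z).det) : Function.Injective Z.mulVec := by
  rw [← isUnit_iff_isUnit_det, ← mulVec_injective_iff_isUnit] at hZ
  refine Function.Injective.of_comp (f := (Zᵀ * W).mulVec) ?_
  simpa only [Function.comp_def, mulVec_mulVec] using hZ

lemma transpose_mul_mul_one_sub_Hmat [DecidableEq Ω] {Z : Matrix Ω p ℝ}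
    (hZ : IsUnit (Zᵀ * W * Z).det) :
    Zᵀ * W * (1 - Hmat W Z) = 0 := by
  rw [Matrix.mul_sub, Matrix.mul_one, Hmat, Mmat, sub_eq_zero]
  simp only [← Matrix.mul_assoc]
  rw [mul_nonsing_inv _ hZ, Matrix.one_mul]

lemma mul_Mmat_mul_transpose_mul_right (Z : Matrix Ω p ℝ) {A : Matrix p p ℝ}
    (hA : IsUnit A.det) :
    Z * A * Mmat W (Z * A) * (Z * A)ᵀ = Z * Mmat W Z * Zᵀ := by
  have hAt : IsUnit Aᵀ.det := by rwa [det_transpose]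
  rw [Mmat, Mmat, transpose_mul, show Aᵀ * Zᵀ * W * (Z * A) = Aᵀ * (Zᵀ * W * Z) * A by
    simp only [Matrix.mul_assoc], Matrix.mul_inv_rev, Matrix.mul_inv_rev]
  simp only [← Matrix.mul_assoc]
  rw [Matrix.mul_nonsing_inv_cancel_right _ _ hA, Matrix.mul_assoc _ (Aᵀ)⁻¹,
    Matrix.nonsing_inv_mul _ hAt, Matrix.mul_one]

lemma fromCols_mul_Mmat_mul_transpose_of_orthogonal (hW : W.IsSymm) {Z₁ : Matrix Ω p ℝ}
    {Z₂ : Matrix Ω q ℝ} (h₂₁ : Z₂ᵀ * W * Z₁ = 0) (h₁ : IsUnit (Z₁ᵀ * W * Z₁).det)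
    (h₂ : IsUnit (Z₂ᵀ * W * Z₂).det) :
    fromCols Z₁ Z₂ * Mmat W (fromCols Z₁ Z₂) * (fromCols Z₁ Z₂)ᵀ =
      Z₁ * Mmat W Z₁ * Z₁ᵀ + Z₂ * Mmat W Z₂ * Z₂ᵀ := by
  have h₁₂ : Z₁ᵀ * W * Z₂ = 0 := by
    rw [← transpose_transpose (Z₁ᵀ * W * Z₂)]
    simp only [transpose_mul, transpose_transpose, hW.eq, ← Matrix.mul_assoc, h₂₁, transpose_zero]
  have hgram : (fromCols Z₁ Z₂)ᵀ * W * fromCols Z₁ Z₂ =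
      fromBlocks (Z₁ᵀ * W * Z₁) 0 0 (Z₂ᵀ * W * Z₂) := by
    rw [transpose_fromCols, fromRows_mul, fromRows_mul_fromCols, h₁₂, h₂₁]
  rw [Mmat, hgram, inv_fromBlocks_zero₁₂_of_isUnit_iff _ _ _ (by
      rw [isUnit_iff_isUnit_det, isUnit_iff_isUnit_det]; exact iff_of_true h₁ h₂),
    fromCols_mul_fromBlocks, transpose_fromCols, fromCols_mul_fromRows]
  simp [Mmat]

lemma one_sub_Hmat_mul_inv_mul_transpose [DecidableEq Ω] (hW : W.IsSymm) (hWu : IsUnit W.det)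
    {Z : Matrix Ω p ℝ} (hZ : IsUnit (Zᵀ * W * Z).det) :
    (1 - Hmat W Z) * W⁻¹ * (1 - Hmat W Z)ᵀ = W⁻¹ - Z * Mmat W Z * Zᵀ := by
  have hHW : Hmat W Z * W⁻¹ = Z * Mmat W Z * Zᵀ := by
    rw [Hmat, Matrix.mul_nonsing_inv_cancel_right _ _ hWu]
  have hHt : (Hmat W Z)ᵀ = W * (Z * Mmat W Z * Zᵀ) := by
    simp only [Hmat, transpose_mul, transpose_transpose, hW.eq, Mmat_transpose hW, Matrix.mul_assoc]
  have hPWP : Z * Mmat W Z * Zᵀ * (W * (Z * Mmat W Z * Zᵀ)) = Z * Mmat W Z * Zᵀ := by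
    calc Z * Mmat W Z * Zᵀ * (W * (Z * Mmat W Z * Zᵀ))
        = Z * (Mmat W Z * (Zᵀ * W * Z) * Mmat W Z) * Zᵀ := by simp only [Matrix.mul_assoc]
      _ = Z * Mmat W Z * Zᵀ := by rw [Mmat, nonsing_inv_mul _ hZ, Matrix.one_mul]
  rw [transpose_sub, transpose_one, hHt, Matrix.sub_mul, Matrix.one_mul, hHW, Matrix.mul_sub,
    Matrix.mul_one, Matrix.sub_mul, ← Matrix.mul_assoc W⁻¹ W, nonsing_inv_mul _ hWu,
    Matrix.one_mul, hPWP]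
  abel

lemma fromCols_one_sub_Hmat_mul_eq [DecidableEq Ω] (U : Matrix Ω p ℝ) (T : Matrix Ω q ℝ) :
    fromCols ((1 - Hmat W T) * U) T =
      fromCols U T *
        (fromBlocks 1 0 (-(Mmat W T * Tᵀ * W * U)) 1 : Matrix (p ⊕ q) (p ⊕ q) ℝ) := by
  rw [fromCols_mul_fromBlocks, Matrix.sub_mul, Matrix.one_mul, Hmat]
  simp only [Matrix.mul_one, Matrix.mul_zero, zero_add, Matrix.mul_neg, ← sub_eq_add_neg,
    Matrix.mul_assoc]

lemma fromCols_mul_Mmat_mul_transpose_eq_add_residual [DecidableEq Ω] (hW : W.PosDef)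
    (U : Matrix Ω p ℝ) (T : Matrix Ω q ℝ) (hX : IsUnit ((fromCols U T)ᵀ * W * fromCols U T).det) :
    fromCols U T * Mmat W (fromCols U T) * (fromCols U T)ᵀ =
      (1 - Hmat W T) * U * Mmat W ((1 - Hmat W T) * U) * ((1 - Hmat W T) * U)ᵀ +
        T * Mmat W T * Tᵀ := by
  set Ud := (1 - Hmat W T) * U
  set A : Matrix (p ⊕ q) (p ⊕ q) ℝ := fromBlocks 1 0 (-(Mmat W T * Tᵀ * W * U)) 1
  have hA : IsUnit A.det := by simp [A]
  have hY : fromCols Ud T = fromCols U T * A := fromCols_one_sub_Hmat_mul_eq U T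
  have hYinj : Function.Injective (fromCols Ud T).mulVec := by
    have hAinj : Function.Injective A.mulVec :=
      mulVec_injective_iff_isUnit.2 ((isUnit_iff_isUnit_det A).2 hA)
    simpa only [hY, Function.comp_def, mulVec_mulVec] using
      (mulVec_injective_of_isUnit_det_gram hX).comp hAinj
  obtain ⟨hUdinj, hTinj⟩ := mulVec_injective_of_fromCols hYinj
  have hT := isUnit_det_gram_of_posDef hW hTinj
  have horth : Tᵀ * W * Ud = 0 := by
    rw [← Matrix.mul_assoc, transpose_mul_mul_one_sub_Hmat hT, Matrix.zero_mul]
  rw [← mul_Mmat_mul_transpose_mul_right _ hA, ← hY,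
    fromCols_mul_Mmat_mul_transpose_of_orthogonal (isHermitian_iff_isSymm.1 hW.isHermitian)
      horth (isUnit_det_gram_of_posDef hW hUdinj) hT]

end Gram

lemma cRows_mul_mul_transpose_cRows {m : ℕ} {n : Fin m → ℕ} {c c' : Type*} [Fintype c]
    [Fintype c'] (i : Fin m) (A : Matrix (Obs n) c ℝ) (N : Matrix c c' ℝ)
    (C : Matrix (Obs n) c' ℝ) :
    cRows i A * N * (cRows i C)ᵀ = (A * N * Cᵀ).submatrix (Sigma.mk i) (Sigma.mk i) := by
  ext j k
  simp [cRows, Matrix.mul_apply]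

theorem B_explicit_form_general
    {m u t : ℕ} {n : Fin m → ℕ}
    (Φb : ∀ i : Fin m, Matrix (Fin (n i)) (Fin (n i)) ℝ)
    (Φ : Matrix (Obs n) (Obs n) ℝ) (hΦ : Φ = Matrix.blockDiagonal' Φb)
    (W : Matrix (Obs n) (Obs n) ℝ)
    (hWΦ : W = Φ⁻¹)
    (U : Matrix (Obs n) (Fin u) ℝ) (T : Matrix (Obs n) (Fin t) ℝ)
    (X : Matrix (Obs n) (Fin u ⊕ Fin t) ℝ) (hX : X = Matrix.fromCols U T)
    (hfullrank : IsUnit (Xᵀ * W * X).det)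
    (Ud : Matrix (Obs n) (Fin u) ℝ) (hUd : Ud = (1 - Hmat W T) * U)
    (D : ∀ i : Fin m, Matrix (Fin (n i)) (Fin (n i)) ℝ)
    (hDinv : ∀ i, IsUnit (D i).det)
    (hDD : ∀ i, (D i)ᵀ * D i = Φb i)
    (B : ∀ i : Fin m, Matrix (Fin (n i)) (Fin (n i)) ℝ)
    (hB : ∀ i, B i = D i * cRows i (1 - Hmat W X) * Φ *
        (cRows i (1 - Hmat W X))ᵀ * (D i)ᵀ) :
    ∀ i : Fin m,
      B i = D i *
        (Φb i - cRows i Ud * Mmat W Ud * (cRows i Ud)ᵀ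
          - cRows i T * Mmat W T * (cRows i T)ᵀ) * (D i)ᵀ := by
  intro i
  have hΦpd : Φ.PosDef := by
    have hΦD : Φ = (blockDiagonal' D)ᴴ * blockDiagonal' D := by
      rw [hΦ, conjTranspose_eq_transpose_of_trivial, blockDiagonal'_transpose,
        ← blockDiagonal'_mul]
      exact congrArg _ (funext fun i => (hDD i).symm)
    rw [hΦD]
    exact PosDef.conjTranspose_mul_self _ <| mulVec_injective_iff_isUnit.2 <|
      isUnit_blockDiagonal' fun i => (isUnit_iff_isUnit_det _).2 (hDinv i)
  have hWpd : W.PosDef := hWΦ ▸ hΦpd.inv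
  have hΦW : Φ = W⁻¹ := by
    rw [hWΦ, nonsing_inv_nonsing_inv _ ((isUnit_iff_isUnit_det _).1 hΦpd.isUnit)]
  have hglobal : (1 - Hmat W X) * Φ * (1 - Hmat W X)ᵀ =
      Φ - Ud * Mmat W Ud * Udᵀ - T * Mmat W T * Tᵀ := by
    rw [hΦW, one_sub_Hmat_mul_inv_mul_transpose
        (isHermitian_iff_isSymm.1 hWpd.isHermitian)
        ((isUnit_iff_isUnit_det _).1 hWpd.isUnit) hfullrank, hUd, hX,
      fromCols_mul_Mmat_mul_transpose_eq_add_residual hWpd U T (hX ▸ hfullrank),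
      sub_add_eq_sub_sub]
  rw [hB, Matrix.mul_assoc (D i), Matrix.mul_assoc (D i)]
  simp only [cRows_mul_mul_transpose_cRows, hglobal]
  congr 2
  ext j k
  simp [hΦ]

/-- with `X = [U T]`, nested within-cluster fixed effects and
`W = Φ⁻¹`, the matrix `B_i = D_i (I−H_X)_i Φ (I−H_X)_iᵀ D_iᵀ` has the explicit form
`B_i = D_i (Φ_i − Ü_i M_Ü Ü_iᵀ − T_i M_T T_iᵀ) D_iᵀ`. -/
theorem B_explicit_form
    {m u t : ℕ} {n : Fin m → ℕ}
    (Φb : ∀ i : Fin m, Matrix (Fin (n i)) (Fin (n i)) ℝ)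
    (hΦpd : ∀ i, (Φb i).PosDef)
    (Φ : Matrix (Obs n) (Obs n) ℝ) (hΦ : Φ = Matrix.blockDiagonal' Φb)
    (Wb : ∀ i : Fin m, Matrix (Fin (n i)) (Fin (n i)) ℝ)
    (hWb : ∀ i, Wb i = (Φb i)⁻¹)
    (W : Matrix (Obs n) (Obs n) ℝ) (hW : W = Matrix.blockDiagonal' Wb)
    (hWΦ : W = Φ⁻¹)
    (U : Matrix (Obs n) (Fin u) ℝ) (T : Matrix (Obs n) (Fin t) ℝ)
    (X : Matrix (Obs n) (Fin u ⊕ Fin t) ℝ) (hX : X = Matrix.fromCols U T)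
    (hfullrank : IsUnit (Xᵀ * W * X).det)
    (hnested : ∀ h k : Fin m, h ≠ k → cRows h T * (cRows k T)ᵀ = 0)
    (Ud : Matrix (Obs n) (Fin u) ℝ) (hUd : Ud = (1 - Hmat W T) * U)
    (D : ∀ i : Fin m, Matrix (Fin (n i)) (Fin (n i)) ℝ)
    (hDinv : ∀ i, IsUnit (D i).det)
    (hDD : ∀ i, (D i)ᵀ * D i = Φb i)
    (B : ∀ i : Fin m, Matrix (Fin (n i)) (Fin (n i)) ℝ)
    (hB : ∀ i, B i = D i * cRows i (1 - Hmat W X) * Φ *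
        (cRows i (1 - Hmat W X))ᵀ * (D i)ᵀ) :
    ∀ i : Fin m,
      B i = D i *
        (Φb i - cRows i Ud * Mmat W Ud * (cRows i Ud)ᵀ
          - cRows i T * Mmat W T * (cRows i T)ᵀ) * (D i)ᵀ :=
  B_explicit_form_general Φb Φ hΦ W hWΦ U T X hX hfullrank Ud hUd D hDinv hDD B hB
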